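/- arXiv:2508.11750 — 2 statements merged into one kernel-verified Lean document; each statement's English description precedes it below -/
import Mathlib

section
/- In the setting of the previous fixed-point gradient formula, additionally fix invertible matrices $P_1, P_2 \in \mathbb{R}^{n\times n}$. For $\beta \in \mathbb{R}$, let $s_\theta^\beta$ be the implicit solution of $\mu_\theta(s) = \beta P_1^{\mathsf T} \nabla C(s^0)$ near $s^0$ (with $s^0_{\theta_0} = s^0$ at $\beta = 0$). Then $\frac{\partial s_{\theta_0}^\beta}{\partial \beta}\big|_{\beta=0} = \big(\nabla_s\mu_{\theta_0}(s^0)\big)^{-1} P_1^{\mathsf T}\,\nabla C(s^0)$, and the quantity $\nu := \big(P_2\,\frac{\partial\mu_\theta}{\partial\theta}(s^0)\big)^{\mathsf T}\,\frac{\partial s^\beta_{\theta_0}}{\partial\beta}\big|_{\beta=0}$ equals $\big(\frac{\partial\mu_\theta}{\partial\theta}(s^0)\big)^{\mathsf T} P_2^{\mathsf T}\,\big(\nabla_s\mu_{\theta_0}(s^0)\big)^{-1} P_1^{\mathsf T}\,\nabla C(s^0)$. In particular, if $P_2^{\mathsf T}(\nabla_s\mu_{\theta_0}(s^0))^{-1}P_1^{\mathsf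 T} = \big((\nabla_s\mu_{\theta_0}(s^0))^{-1}\big)^{\mathsf T}$, then $-\nu = \frac{\partial J}{\partial\theta}(\theta_0)^{\mathsf T}$, i.e. the nudged-phase estimate recovers the exact gradient. -/
open Matrix

/-- Generalized Equilibrium Propagation with exact symmetry: the derivative of the
nudged steady state at `β = 0` is `(∇_s μ)⁻¹ P₁ᵀ ∇C(s⁰)`, the quantity
`ν_j = (P₂ ∂_θ μ e_j) ⬝ (∂s^β/∂β)|₀` equals `(∂_θ μ e_j) ⬝ P₂ᵀ (∇_s μ)⁻¹ P₁ᵀ ∇C(s⁰)`,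
and if `P₂ᵀ (∇_s μ)⁻¹ P₁ᵀ = ((∇_s μ)⁻¹)ᵀ` then `-ν` is the exact gradient of
`J(θ) = C(s_θ)`. -/
theorem stmt_14 {p n : ℕ} (μ : (Fin p → ℝ) → (Fin n → ℝ) → (Fin n → ℝ))
    (C : (Fin n → ℝ) → ℝ) (θ0 : Fin p → ℝ) (s0 : Fin n → ℝ)
    (s : (Fin p → ℝ) → (Fin n → ℝ)) (sβ : ℝ → (Fin n → ℝ))
    (Jm P₁ P₂ : Matrix (Fin n) (Fin n) ℝ) (gvec : Fin n → ℝ)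
    (hμ : ContDiff ℝ 1 (fun q : (Fin p → ℝ) × (Fin n → ℝ) => μ q.1 q.2))
    (hC : DifferentiableAt ℝ C s0)
    (hgrad : ⇑(fderiv ℝ C s0) = fun v => gvec ⬝ᵥ v)
    (h0 : μ θ0 s0 = 0) (hs0 : s θ0 = s0) (hscont : ContinuousAt s θ0)
    (hfix : ∀ᶠ θ in nhds θ0, μ θ (s θ) = 0)
    (hJ : ⇑(fderiv ℝ (μ θ0) s0) = Jm.mulVec) (hJu : IsUnit Jm)
    (hP₁ : IsUnit P₁) (hP₂ : IsUnit P₂)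
    (hβ0 : sβ 0 = s0) (hβcont : ContinuousAt sβ 0)
    (hβfix : ∀ᶠ β in nhds (0 : ℝ), μ θ0 (sβ β) = β • (P₁ᵀ.mulVec gvec)) :
    deriv sβ 0 = Jm⁻¹.mulVec (P₁ᵀ.mulVec gvec) ∧
    (∀ j : Fin p,
      (P₂.mulVec ((fderiv ℝ (fun θ => μ θ s0) θ0) (Pi.single j 1))) ⬝ᵥ deriv sβ 0 =
        ((fderiv ℝ (fun θ => μ θ s0) θ0) (Pi.single j 1)) ⬝ᵥ
          (P₂ᵀ.mulVec (Jm⁻¹.mulVec (P₁ᵀ.mulVec gvec)))) ∧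
    (P₂ᵀ * Jm⁻¹ * P₁ᵀ = (Jm⁻¹)ᵀ →
      ∀ j : Fin p,
        -((P₂.mulVec ((fderiv ℝ (fun θ => μ θ s0) θ0) (Pi.single j 1))) ⬝ᵥ deriv sβ 0) =
          fderiv ℝ (fun θ => C (s θ)) θ0 (Pi.single j 1)) := by
  classical
  have hJinv : Invertible Jm := Jm.invertibleOfIsUnitDet ((Matrix.isUnit_iff_isUnit_det Jm).mp hJu)
  let J' : (Fin n → ℝ) ≃L[ℝ] (Fin n → ℝ) :=
    (Jm.toLinearEquiv' hJinv).toContinuousLinearEquiv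
  have hJ'app : ∀ v, J' v = Jm.mulVec v := fun v => rfl
  have hJ'symm : ∀ v, J'.symm v = Jm⁻¹.mulVec v := fun v => by
    rw [← Matrix.invOf_eq_nonsing_inv]
    rfl
  -- strict derivative of `μ θ0` at `s0`
  have hcd : ContDiffAt ℝ 1 (μ θ0) s0 :=
    (hμ.comp (contDiff_const.prodMk contDiff_id)).contDiffAt
  have h1 : HasStrictFDerivAt (μ θ0) (fderiv ℝ (μ θ0) s0) s0 := hcd.hasStrictFDerivAt one_ne_zero
  have hfd : fderiv ℝ (μ θ0) s0 = (J' : (Fin n → ℝ) →L[ℝ] (Fin n → ℝ)) :=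
    ContinuousLinearMap.ext fun v => (congrFun hJ v).trans (hJ'app v).symm
  rw [hfd] at h1
  -- Part 1: derivative of the nudged state
  set w := P₁ᵀ.mulVec gvec with hw
  have hβd : HasDerivAt sβ (Jm⁻¹.mulVec w) 0 := by
    have hleft := h1.eventually_left_inverse
    have htend : Filter.Tendsto sβ (nhds 0) (nhds s0) := by
      have := hβcont.tendsto
      rwa [hβ0] at this
    have heq : sβ =ᶠ[nhds (0 : ℝ)]
        fun β => h1.localInverse (μ θ0) _ s0 (β • w) := by
      filter_upwards [htend.eventually hleft, hβfix] with β h1' h2'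
      rw [← h2', h1']
    have hginv : HasStrictFDerivAt (h1.localInverse (μ θ0) _ s0)
        (J'.symm : (Fin n → ℝ) →L[ℝ] (Fin n → ℝ)) 0 := by
      have := h1.to_localInverse
      rwa [h0] at this
    have hsmul : HasDerivAt (fun β : ℝ => β • w) w 0 := by
      simpa using (hasDerivAt_id (0 : ℝ)).smul_const w
    have hg0 : HasFDerivAt (h1.localInverse (μ θ0) _ s0)
        (J'.symm : (Fin n → ℝ) →L[ℝ] (Fin n → ℝ)) ((0 : ℝ) • w) := by
      simpa using hginv.hasFDerivAt
    have hcomp : HasDerivAt (fun β : ℝ => h1.localInverse (μ θ0) _ s0 (β • w))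
        (J'.symm w) 0 := by have := hg0.comp_hasDerivAt 0 hsmul; exact this
    have := hcomp.congr_of_eventuallyEq heq
    rwa [hJ'symm] at this
  have hderiv : deriv sβ 0 = Jm⁻¹.mulVec w := hβd.deriv
  -- the symmetry trick for dot products
  have hdot : ∀ u v : Fin n → ℝ, P₂.mulVec u ⬝ᵥ v = u ⬝ᵥ P₂ᵀ.mulVec v := fun u v => by
    rw [Matrix.dotProduct_mulVec, Matrix.vecMul_transpose]
  refine ⟨hderiv, fun j => by rw [hderiv, hdot], ?_⟩
  intro hsym j
  -- Part 3: the implicit function theorem for `s`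
  set B := fderiv ℝ (fun θ => μ θ s0) θ0 with hB
  set f : (Fin p → ℝ) × (Fin n → ℝ) → (Fin n → ℝ) := fun q => μ q.1 q.2 with hfdef
  have hD : HasStrictFDerivAt f (fderiv ℝ f (θ0, s0)) (θ0, s0) :=
    hμ.contDiffAt.hasStrictFDerivAt one_ne_zero
  set D := fderiv ℝ f (θ0, s0) with hDdef
  have hDinr : ∀ v, D (0, v) = Jm.mulVec v := by
    have hc : HasFDerivAt (μ θ0)
        (D.comp (ContinuousLinearMap.inr ℝ (Fin p → ℝ) (Fin n → ℝ))) s0 :=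
      hD.hasFDerivAt.comp s0 (hasFDerivAt_prodMk_right θ0 s0)
    intro v
    calc D (0, v) = (fderiv ℝ (μ θ0) s0) v := by rw [hc.fderiv]; rfl
      _ = Jm.mulVec v := congrFun hJ v
  have hDinl : ∀ u, D (u, 0) = B u := by
    have hc : HasFDerivAt (fun θ => μ θ s0)
        (D.comp (ContinuousLinearMap.inl ℝ (Fin p → ℝ) (Fin n → ℝ))) θ0 :=
      by have := hD.hasFDerivAt.comp θ0 (hasFDerivAt_prodMk_left (𝕜 := ℝ) θ0 s0); exact this
    intro u
    rw [hB, hc.fderiv]; rfl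
  have hDsplit : ∀ q : (Fin p → ℝ) × (Fin n → ℝ), D q = B q.1 + Jm.mulVec q.2 := fun q => by
    calc D q = D ((q.1, (0 : Fin n → ℝ)) + ((0 : Fin p → ℝ), q.2)) := by
          congr 1; simp [Prod.ext_iff]
      _ = D (q.1, 0) + D (0, q.2) := map_add _ _ _
      _ = B q.1 + Jm.mulVec q.2 := by rw [hDinl, hDinr]
  set fwd : ((Fin p → ℝ) × (Fin n → ℝ)) →L[ℝ] ((Fin p → ℝ) × (Fin n → ℝ)) :=
    (ContinuousLinearMap.fst ℝ _ _).prod D with hfwd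
  set bwd : ((Fin p → ℝ) × (Fin n → ℝ)) →L[ℝ] ((Fin p → ℝ) × (Fin n → ℝ)) :=
    (ContinuousLinearMap.fst ℝ _ _).prod
      ((J'.symm : (Fin n → ℝ) →L[ℝ] (Fin n → ℝ)).comp
        ((ContinuousLinearMap.snd ℝ _ _) - B.comp (ContinuousLinearMap.fst ℝ _ _))) with hbwd
  have hbf : Function.LeftInverse bwd fwd := fun q => by
    show (q.1, J'.symm (D q - B q.1)) = q
    rw [hDsplit, add_sub_cancel_left, ← hJ'app, ContinuousLinearEquiv.symm_apply_apply]
  have hfb : Function.RightInverse bwd fwd := fun q => by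
    show (q.1, D (q.1, J'.symm (q.2 - B q.1))) = q
    rw [hDsplit, ← hJ'app, ContinuousLinearEquiv.apply_symm_apply]
    simp
  set A := ContinuousLinearEquiv.equivOfInverse fwd bwd hbf hfb with hA
  have Asm : ((Fin p → ℝ) × (Fin n → ℝ)) →L[ℝ] ((Fin p → ℝ) × (Fin n → ℝ)) := A.symm
  set Φ : ((Fin p → ℝ) × (Fin n → ℝ)) → ((Fin p → ℝ) × (Fin n → ℝ)) :=
    fun q => (q.1, f q) with hΦdef
  have hΦ : HasStrictFDerivAt Φ (A : _ →L[ℝ] _) (θ0, s0) := by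
    have hAc : (A : ((Fin p → ℝ) × (Fin n → ℝ)) →L[ℝ] ((Fin p → ℝ) × (Fin n → ℝ))) = fwd := rfl
    rw [hAc, hfwd, hDdef]
    exact hasStrictFDerivAt_fst.prodMk hD
  have hΨd : HasStrictFDerivAt (hΦ.localInverse Φ _ (θ0, s0))
      ((A.symm : ((Fin p → ℝ) × (Fin n → ℝ)) ≃L[ℝ] ((Fin p → ℝ) × (Fin n → ℝ))) : ((Fin p → ℝ) × (Fin n → ℝ)) →L[ℝ] ((Fin p → ℝ) × (Fin n → ℝ))) (θ0, (0 : Fin n → ℝ)) := by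
    have := hΦ.to_localInverse
    rwa [show Φ (θ0, s0) = (θ0, (0 : Fin n → ℝ)) by simp [hΦdef, hfdef, h0]] at this
  have htends : Filter.Tendsto (fun θ => (θ, s θ)) (nhds θ0) (nhds (θ0, s0)) := by
    have h := hscont.tendsto
    rw [hs0] at h
    exact Filter.tendsto_id.prodMk_nhds h
  have hseq : s =ᶠ[nhds θ0] fun θ => (hΦ.localInverse Φ _ (θ0, s0) (θ, 0)).2 := by
    filter_upwards [htends.eventually hΦ.eventually_left_inverse, hfix] with θ h1' h2'
    have hΦθ : Φ (θ, s θ) = (θ, (0 : Fin n → ℝ)) := by simp [hΦdef, hfdef, h2']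
    rw [hΦθ] at h1'
    rw [h1']
  set L : (Fin p → ℝ) →L[ℝ] (Fin n → ℝ) :=
    (ContinuousLinearMap.snd ℝ _ _).comp
      (((A.symm : ((Fin p → ℝ) × (Fin n → ℝ)) ≃L[ℝ] ((Fin p → ℝ) × (Fin n → ℝ))) : ((Fin p → ℝ) × (Fin n → ℝ)) →L[ℝ] ((Fin p → ℝ) × (Fin n → ℝ))).comp (ContinuousLinearMap.inl ℝ (Fin p → ℝ) (Fin n → ℝ))) with hL
  have hsd : HasFDerivAt s L θ0 := by
    have h1' : HasFDerivAt (fun θ => hΦ.localInverse Φ _ (θ0, s0) (θ, 0))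
        (((A.symm : ((Fin p → ℝ) × (Fin n → ℝ)) ≃L[ℝ] ((Fin p → ℝ) × (Fin n → ℝ))) : ((Fin p → ℝ) × (Fin n → ℝ)) →L[ℝ] ((Fin p → ℝ) × (Fin n → ℝ))).comp (ContinuousLinearMap.inl ℝ (Fin p → ℝ) (Fin n → ℝ))) θ0 :=
      hΨd.hasFDerivAt.comp θ0 (hasFDerivAt_prodMk_left θ0 (0 : Fin n → ℝ))
    have h2' : HasFDerivAt (fun θ => (hΦ.localInverse Φ _ (θ0, s0) (θ, 0)).2) L θ0 :=
      (ContinuousLinearMap.snd ℝ (Fin p → ℝ) (Fin n → ℝ)).hasFDerivAt.comp θ0 h1'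
    exact h2'.congr_of_eventuallyEq hseq
  have hLapp : ∀ u, L u = -(Jm⁻¹.mulVec (B u)) := fun u => by
    show J'.symm ((0 : Fin n → ℝ) - B u) = _
    rw [zero_sub, map_neg, hJ'symm]
  have hCs : HasFDerivAt (fun θ => C (s θ)) ((fderiv ℝ C s0).comp L) θ0 := by
    have hc : HasFDerivAt C (fderiv ℝ C s0) (s θ0) := by rw [hs0]; exact hC.hasFDerivAt
    exact hc.comp θ0 hsd
  rw [hCs.fderiv]
  have hRHS : ((fderiv ℝ C s0).comp L) (Pi.single j 1) = gvec ⬝ᵥ L (Pi.single j 1) := by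
    rw [ContinuousLinearMap.comp_apply]; exact congrFun hgrad _
  rw [hRHS, hLapp, hderiv, hdot, hw, Matrix.mulVec_mulVec, Matrix.mulVec_mulVec, hsym]
  rw [dotProduct_neg, Matrix.dotProduct_mulVec, Matrix.vecMul_transpose,
    dotProduct_comm]
end

section
/- Let $F_\theta$, $\bar\xi$, $\Pi$, $\Gamma$, $\Sigma$ be as in the parameter-sensitivity lemma (with $\Pi, \Sigma$ invertible), let $C$ be a differentiable real cost function of $\xi_{\mathrm{out}}$, and suppose the exact symmetry $\big(\nabla_\xi F_{\theta_0}(\bar\xi)^{-1}\big)^\dagger = U_1\, \nabla_\xi F_{\theta_0}(\bar\xi)^{-1}\, U_2$ holds for invertible matrices $U_1, U_2$. Define the injected error signal $\delta\xi_{\mathrm{in}} := \beta\,\Pi^{-1} U_2 \Sigma^\dagger\,\overline{\nabla C(\xi_{\mathrm{out}})}$ for $\beta > 0$, and let $\delta\xi_{\mathrm{out}}^{\mathrm{lin}} := S(\bar\xi)\,\delta\xi_{\mathrm{in}}$ with $S(\bar\xi) = \Gamma + \Sigma\nabla_\xi F_{\theta_0}(\bar\xi)^{-1}\Pi$ denote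 the linear response. Then the exact gradient satisfies $\frac{\partial (C\circ\xi_{\mathrm{out}})}{\partial\theta}(\theta_0) = -\Big(\frac{\partial F_\theta}{\partial\theta}(\bar\xi)\Big)^\dagger U_1\,\Sigma^{-1}\,\frac{\delta\xi_{\mathrm{out}}^{\mathrm{lin}} - \Gamma\,\delta\xi_{\mathrm{in}}}{\beta}$. -/
open Matrix

/-!
With `W = Jm⁻¹`, the difference `δξ_out - Γ δξ_in` of the linear response removes the direct
scattering `Γ` and leaves `β Σ W Π δξ_in`. Unwinding `δξ_in`, the invertible factors `Π`, `Σ`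
cancel and the matrix applied to the cost gradient becomes `U₁ W U₂ Σᴴ = Wᴴ Σᴴ = (Σ W)ᴴ`,
which is exactly the adjoint of the parameter sensitivity `∂_θ ξ_out = -Σ W ∂_θ F`.
-/

section

variable {R : Type*} {l n : Type*}

theorem smul_inv_mulVec_add_sub_mulVec [Field R] [Fintype n] {c : R} (hc : c ≠ 0)
    (G K : Matrix l n R) (w : n → R) :
    c⁻¹ • ((G + K) *ᵥ (c • w) - G *ᵥ (c • w)) = K *ᵥ w := by
  rw [add_mulVec, add_sub_cancel_left, mulVec_smul, smul_smul, inv_mul_cancel₀ hc, one_smul]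

theorem star_mulVec_dotProduct [CommSemiring R] [StarRing R] [Fintype l] [Fintype n]
    (A : Matrix l n R) (x : n → R) (g : l → R) :
    star (A *ᵥ x) ⬝ᵥ g = star x ⬝ᵥ Aᴴ *ᵥ g := by
  rw [star_mulVec, dotProduct_mulVec]

theorem mul_inv_mul_mul_inv_mul_eq_conjTranspose [CommRing R] [StarRing R] [Fintype n]
    [DecidableEq n] {S P W U₁ U₂ : Matrix n n R} (hS : IsUnit S) (hP : IsUnit P)
    (hsym : Wᴴ = U₁ * W * U₂) :
    U₁ * S⁻¹ * (S * W * P) * (P⁻¹ * U₂ * Sᴴ) = (S * W)ᴴ := by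
  have hSS : S⁻¹ * S = 1 := nonsing_inv_mul S ((isUnit_iff_isUnit_det S).mp hS)
  have hPP : P * P⁻¹ = 1 := mul_nonsing_inv P ((isUnit_iff_isUnit_det P).mp hP)
  calc U₁ * S⁻¹ * (S * W * P) * (P⁻¹ * U₂ * Sᴴ)
      = U₁ * (S⁻¹ * S) * W * (P * P⁻¹) * U₂ * Sᴴ := by simp only [Matrix.mul_assoc]
    _ = Wᴴ * Sᴴ := by rw [hSS, hPP, Matrix.mul_one, Matrix.mul_one, hsym]
    _ = (S * W)ᴴ := (conjTranspose_mul S W).symm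

end

/-- `G, Pm, Sm, Jm` stand for `Γ, Π, Σ, ∇_ξ F_{θ₀}(ξ̄)`, `gvec` for `(∂C/∂ξ_out)*` and `Fj j` for
`∂F/∂θ_j (ξ̄)`; the left side is `(∂_{θ_j} ξ_out)ᴴ gvec`. -/
theorem stmt_19_general {m p : ℕ} (G Pm Sm Jm U₁ U₂ : Matrix (Fin m) (Fin m) ℂ)
    (gvec : Fin m → ℂ) (Fj : Fin p → (Fin m → ℂ)) (β : ℝ)
    (hPm : IsUnit Pm) (hSm : IsUnit Sm)
    (hβ : 0 < β)
    (hsym : (Jm⁻¹)ᴴ = U₁ * Jm⁻¹ * U₂) :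
    ∀ j : Fin p,
      star ((-(Sm * Jm⁻¹)).mulVec (Fj j)) ⬝ᵥ gvec =
        -(star (Fj j) ⬝ᵥ (U₁ * Sm⁻¹).mulVec
            ((β : ℂ)⁻¹ •
              ((G + Sm * Jm⁻¹ * Pm).mulVec
                  ((β : ℂ) • ((Pm⁻¹ * U₂ * Smᴴ).mulVec gvec)) -
                G.mulVec ((β : ℂ) • ((Pm⁻¹ * U₂ * Smᴴ).mulVec gvec))))) := by
  intro j
  have hβ' : (β : ℂ) ≠ 0 := by exact_mod_cast hβ.ne'
  rw [smul_inv_mulVec_add_sub_mulVec hβ', mulVec_mulVec, mulVec_mulVec,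
    mul_inv_mul_mul_inv_mul_eq_conjTranspose hSm hPm hsym, star_mulVec_dotProduct,
    conjTranspose_neg, neg_mulVec, dotProduct_neg]

/-- Exact-symmetry version of the Scattering Backpropagation gradient formula.
With `W = (∇_ξ F)⁻¹ = Jm⁻¹` satisfying `Wᴴ = U₁ W U₂`, cost gradient
`gvec = ∂C/∂ξ*_out`, per-parameter derivatives `Fj j = ∂F/∂θ_j`, injected error
signal `δξ_in = β Π⁻¹ U₂ Σᴴ gvec` and linear response
`δξ_out = (Γ + Σ W Π) δξ_in`, the exact gradient
`∂_θ C = (∂ξ_out/∂θ)ᴴ (∂C/∂ξ_out)* = (-(Σ W) Fj)ᴴ ⬝ gvec` equals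
`-(Fj)ᴴ U₁ Σ⁻¹ (δξ_out - Γ δξ_in)/β`. -/
theorem stmt_19 {m p : ℕ} (G Pm Sm Jm U₁ U₂ : Matrix (Fin m) (Fin m) ℂ)
    (gvec : Fin m → ℂ) (Fj : Fin p → (Fin m → ℂ)) (β : ℝ)
    (hPm : IsUnit Pm) (hSm : IsUnit Sm) (hJm : IsUnit Jm)
    (hU₁ : IsUnit U₁) (hU₂ : IsUnit U₂) (hβ : 0 < β)
    (hsym : (Jm⁻¹)ᴴ = U₁ * Jm⁻¹ * U₂) :
    ∀ j : Fin p,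
      star ((-(Sm * Jm⁻¹)).mulVec (Fj j)) ⬝ᵥ gvec =
        -(star (Fj j) ⬝ᵥ (U₁ * Sm⁻¹).mulVec
            ((β : ℂ)⁻¹ •
              ((G + Sm * Jm⁻¹ * Pm).mulVec
                  ((β : ℂ) • ((Pm⁻¹ * U₂ * Smᴴ).mulVec gvec)) -
                G.mulVec ((β : ℂ) • ((Pm⁻¹ * U₂ * Smᴴ).mulVec gvec))))) :=
  stmt_19_general G Pm Sm Jm U₁ U₂ gvec Fj β hPm hSm hβ hsym
end
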